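/- arXiv:2403.04589 — 2 statements merged into one kernel-verified Lean document; each statement's English description precedes it below -/
import Mathlib

section
/- Let 𝒯 = (T, λ) be a temporal rooted directed tree. Then the minimum cardinality of a temporally disjoint path cover of 𝒯, the minimum cardinality of a temporal path cover of 𝒯, and the maximum size of a temporal antichain of 𝒯 are all equal (temporal rooted directed trees satisfy the Dilworth and TD-Dilworth properties). -/
/-! A temporal digraph on vertex set `V` is encoded by its arc-labeling
`lab : V → V → Finset ℕ`: there is an arc `u → v` iff `lab u v` is nonempty,
and `lab u v` is the (finite) set of time-steps at which the arc `u → v` is active. -/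

/-- A temporal (directed) path: vertices `verts 0, …, verts len`, pairwise distinct,
traversed at strictly increasing times `times 0 < … < times (len-1)`, each arc being
active at the time it is traversed. A single vertex (`len = 0`) is a temporal path. -/
structure TPath {V : Type*} (lab : V → V → Finset ℕ) where
  len : ℕ
  verts : Fin (len + 1) → V
  times : Fin len → ℕ
  inj : Function.Injective verts
  mono : StrictMono times
  mem_lab : ∀ i : Fin len, times i ∈ lab (verts i.castSucc) (verts i.succ)

/-- The set of vertices lying on a temporal path. -/
def TPath.vertexSet {V : Type*} {lab : V → V → Finset ℕ} (P : TPath lab) : Set V :=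
  Set.range P.verts

/-- `P` is a temporal path from `u` to `v`. -/
def TPath.FromTo {V : Type*} {lab : V → V → Finset ℕ} (P : TPath lab) (u v : V) : Prop :=
  P.verts 0 = u ∧ P.verts (Fin.last P.len) = v

/-- Two vertices are temporally connected if some temporal path contains both of them. -/
def TempConnected {V : Type*} (lab : V → V → Finset ℕ) (u v : V) : Prop :=
  ∃ P : TPath lab, u ∈ P.vertexSet ∧ v ∈ P.vertexSet

/-- A temporal antichain: a set of pairwise not temporally connected vertices. -/
def IsTempAntichain {V : Type*} (lab : V → V → Finset ℕ) (S : Set V) : Prop :=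
  S.Pairwise fun u v => ¬ TempConnected lab u v

/-- A family of temporal paths is a temporal path cover if every vertex lies on some path. -/
def IsTPC {V : Type*} (lab : V → V → Finset ℕ) {m : ℕ} (C : Fin m → TPath lab) : Prop :=
  ∀ v : V, ∃ i, v ∈ (C i).vertexSet

/-- Two temporal paths are temporally disjoint if any two of their arcs sharing an
end-vertex are traversed at distinct time-steps. -/
def TDisjoint {V : Type*} {lab : V → V → Finset ℕ} (P Q : TPath lab) : Prop :=
  ∀ i : Fin P.len, ∀ j : Fin Q.len,
    (P.verts i.castSucc = Q.verts j.castSucc ∨ P.verts i.castSucc = Q.verts j.succ ∨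
     P.verts i.succ = Q.verts j.castSucc ∨ P.verts i.succ = Q.verts j.succ) →
    P.times i ≠ Q.times j

/-- The set of possible cardinalities of temporal path covers. -/
def tpcSizes {V : Type*} (lab : V → V → Finset ℕ) : Set ℕ :=
  {m | ∃ C : Fin m → TPath lab, IsTPC lab C}

/-- The set of possible cardinalities of temporally disjoint path covers. -/
def tdpcSizes {V : Type*} (lab : V → V → Finset ℕ) : Set ℕ :=
  {m | ∃ C : Fin m → TPath lab, IsTPC lab C ∧ ∀ i j, i ≠ j → TDisjoint (C i) (C j)}

/-- The set of possible cardinalities of temporal antichains. -/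
def antichainSizes {V : Type*} (lab : V → V → Finset ℕ) : Set ℕ :=
  {m | ∃ S : Finset V, S.card = m ∧ IsTempAntichain lab ↑S}

/-- The underlying undirected graph (forget orientations and labels). -/
def underlyingGraph {V : Type*} (lab : V → V → Finset ℕ) : SimpleGraph V where
  Adj u v := u ≠ v ∧ ((lab u v).Nonempty ∨ (lab v u).Nonempty)
  symm := by constructor; intro u v h; exact ⟨h.1.symm, h.2.symm⟩
  loopless := by constructor; intro v h; exact h.1 rfl

/-- All time labels are positive integers. -/
def PositiveLabels {V : Type*} (lab : V → V → Finset ℕ) : Prop :=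
  ∀ u v : V, ∀ t ∈ lab u v, 0 < t

/-- A temporal oriented tree: the underlying undirected graph is a tree and the digraph is
an orientation of it (no pair of opposite arcs, no loops). -/
def IsTemporalOrientedTree {V : Type*} (lab : V → V → Finset ℕ) : Prop :=
  (underlyingGraph lab).IsTree ∧ ∀ u v : V, (lab u v).Nonempty → lab v u = ∅

/-- The connectivity graph: two distinct vertices are adjacent iff temporally connected. -/
def connGraph {V : Type*} (lab : V → V → Finset ℕ) : SimpleGraph V where
  Adj u v := u ≠ v ∧ TempConnected lab u v
  symm := by constructor; intro u v h; exact ⟨h.1.symm, h.2.imp fun P hP => ⟨hP.2, hP.1⟩⟩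
  loopless := by constructor; intro v h; exact h.1 rfl

/-- `c` lists the vertices of an induced cycle of length `n` of `G`, in cyclic order:
the listed vertices are distinct and two of them are adjacent iff they are cyclically
consecutive. -/
def IsInducedCycle {V : Type*} (G : SimpleGraph V) (n : ℕ) (c : Fin n → V) : Prop :=
  Function.Injective c ∧
    ∀ i j : Fin n, G.Adj (c i) (c j) ↔ ((i.val + 1) % n = j.val ∨ (j.val + 1) % n = i.val)

/-- A hole: an induced cycle of length at least 5. -/
def HasHole {V : Type*} (G : SimpleGraph V) : Prop :=
  ∃ n, 5 ≤ n ∧ ∃ c : Fin n → V, IsInducedCycle G n c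

/-- An anti-hole: an induced subgraph whose complement is a cycle of length at least 5. -/
def HasAntihole {V : Type*} (G : SimpleGraph V) : Prop :=
  ∃ n, 5 ≤ n ∧ ∃ c : Fin n → V, IsInducedCycle Gᶜ n c

/-- A graph is weakly chordal if it has no hole and no anti-hole. -/
def WeaklyChordal {V : Type*} (G : SimpleGraph V) : Prop :=
  ¬ HasHole G ∧ ¬ HasAntihole G


/-! Run the greedy algorithm bottom-up. Let `τ v` be the first time of the path built at `v`:
`v` is prepended, through an arc at time `t < τ c`, to the path of a child `c`, with `t` as late
as possible; if there is no such child, `v` starts a new path and `τ v = ⊤`. The vertices with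
`τ = ⊤` are the last vertices of the paths, so there are as many of them as paths, and they form
a temporal antichain: along a temporal path ending at such a vertex every arc time is a possible
extension time, so the path cannot start at another vertex with `τ = ⊤`. The paths are
vertex-disjoint, hence temporally disjoint, and an antichain meets each path of any cover at most
once. -/

namespace TPath

variable {V : Type*} {lab : V → V → Finset ℕ}

def single (lab : V → V → Finset ℕ) (v : V) : TPath lab where
  len := 0
  verts _ := v
  times := Fin.elim0
  inj _ _ _ := Fin.ext (by omega)
  mono := fun i => i.elim0
  mem_lab := fun i => i.elim0

@[simp] lemma vertexSet_single (v : V) : (single lab v).vertexSet = {v} :=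
  Set.range_const

def cons (P : TPath lab) (v : V) (t : ℕ) (hv : v ∉ P.vertexSet)
    (ht : t ∈ lab v (P.verts 0)) (hlt : ∀ i, t < P.times i) : TPath lab where
  len := P.len + 1
  verts := Fin.cons v P.verts
  times := Fin.cons t P.times
  inj := Fin.cons_injective_iff.2 ⟨hv, P.inj⟩
  mono := Fin.strictMono_cons.2 ⟨hlt, P.mono⟩
  mem_lab := Fin.cases ht fun i => by simpa [← Fin.succ_castSucc] using P.mem_lab i

variable (P : TPath lab) (v : V) (t : ℕ) (hv : v ∉ P.vertexSet)
  (ht : t ∈ lab v (P.verts 0)) (hlt : ∀ i, t < P.times i)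

@[simp] lemma vertexSet_cons : (P.cons v t hv ht hlt).vertexSet = insert v P.vertexSet :=
  Fin.range_cons v P.verts

end TPath

lemma TDisjoint.of_disjoint {V : Type*} {lab : V → V → Finset ℕ} {P Q : TPath lab}
    (h : Disjoint P.vertexSet Q.vertexSet) : TDisjoint P Q := by
  rintro i j (he | he | he | he) <;> exact absurd he (h.ne_of_mem ⟨_, rfl⟩ ⟨_, rfl⟩)

lemma IsTempAntichain.card_le {V : Type*} {lab : V → V → Finset ℕ} {S : Finset V}
    (hS : IsTempAntichain lab S) {m : ℕ} {C : Fin m → TPath lab} (hC : IsTPC lab C) :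
    S.card ≤ m := by
  choose f hf using hC
  have hinj : Set.InjOn f S := fun x hx y hy hxy => by_contra fun hne =>
    hS hx hy hne ⟨C (f x), hf x, hxy ▸ hf y⟩
  simpa using Finset.card_le_card_of_injOn f (fun _ _ => Finset.mem_univ _) hinj

theorem dilworth_of_disjoint_cover {V : Type*} {lab : V → V → Finset ℕ} {ι : Type*} [Fintype ι]
    (C : ι → TPath lab) (hcov : ∀ v, ∃ i, v ∈ (C i).vertexSet)
    (hdisj : Pairwise fun i j => Disjoint (C i).vertexSet (C j).vertexSet) {S : Finset V}
    (hS : IsTempAntichain lab S) (hcard : S.card = Fintype.card ι) :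
    ∃ k : ℕ, IsLeast (tdpcSizes lab) k ∧ IsLeast (tpcSizes lab) k ∧
      IsGreatest (antichainSizes lab) k := by
  set e := Fintype.equivFin ι
  have hcov' : IsTPC lab (C ∘ e.symm) := fun v => (hcov v).imp' e fun i hi => by simpa using hi
  have htd : ∀ i j, i ≠ j → TDisjoint ((C ∘ e.symm) i) ((C ∘ e.symm) j) := fun i j hij =>
    TDisjoint.of_disjoint (hdisj (e.symm.injective.ne hij))
  refine ⟨Fintype.card ι, ⟨⟨_, hcov', htd⟩, ?_⟩, ⟨⟨_, hcov'⟩, ?_⟩, ⟨⟨S, hcard, hS⟩, ?_⟩⟩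
  · rintro m ⟨D, hD, -⟩
    exact hcard ▸ hS.card_le hD
  · rintro m ⟨D, hD⟩
    exact hcard ▸ hS.card_le hD
  · rintro m ⟨T, rfl, hT⟩
    exact hT.card_le hcov'

abbrev Arc {V : Type*} (lab : V → V → Finset ℕ) (u v : V) : Prop := (lab u v).Nonempty

section Greedy

variable {V : Type*} {lab : V → V → Finset ℕ}

-- `τ c = ⊤` encodes a one-vertex path at `c`, which can be extended at any time.
def extTimes (lab : V → V → Finset ℕ) (τ : V → ℕ∞) (p : V) : Set ℕ :=
  {t | ∃ c, t ∈ lab p c ∧ (t : ℕ∞) < τ c}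

open Classical in
noncomputable def greedyStart (lab : V → V → Finset ℕ) (τ : V → ℕ∞) (p : V) : ℕ∞ :=
  if (extTimes lab τ p).Nonempty then (sSup (extTimes lab τ p) : ℕ) else ⊤

lemma greedyStart_congr {τ τ' : V → ℕ∞} {p : V} (h : ∀ c, Arc lab p c → τ c = τ' c) :
    greedyStart lab τ p = greedyStart lab τ' p := by
  have : extTimes lab τ p = extTimes lab τ' p := by
    ext t
    exact exists_congr fun c => and_congr_right fun ht => by rw [h c ⟨t, ht⟩]
  rw [greedyStart, greedyStart, this]

lemma exists_eq_greedyStart (hwf : WellFounded fun c p => Arc lab p c) :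
    ∃ τ : V → ℕ∞, ∀ p, τ p = greedyStart lab τ p := by
  classical
  refine ⟨hwf.fix fun p ih => greedyStart lab (fun c => if hc : Arc lab p c then ih c hc else ⊤) p,
    fun p => ?_⟩
  rw [hwf.fix_eq]
  exact greedyStart_congr fun c hc => dif_pos hc

lemma bddAbove_extTimes [Finite V] (τ : V → ℕ∞) (p : V) : BddAbove (extTimes lab τ p) :=
  ((Set.finite_iUnion fun c => (lab p c).finite_toSet).subset
    fun _ ht => Set.mem_iUnion.2 (ht.imp fun _ => And.left)).bddAbove

variable {τ : V → ℕ∞} (hτ : ∀ p, τ p = greedyStart lab τ p)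
include hτ

lemma ne_top_of_mem_extTimes {p : V} {t : ℕ} (ht : t ∈ extTimes lab τ p) : τ p ≠ ⊤ := by
  rw [hτ, greedyStart, if_pos ⟨t, ht⟩]
  exact ENat.natCast_ne_top _

variable [Finite V]

lemma le_of_mem_extTimes {p : V} {t : ℕ} (ht : t ∈ extTimes lab τ p) : (t : ℕ∞) ≤ τ p := by
  rw [hτ, greedyStart, if_pos ⟨t, ht⟩, Nat.cast_le]
  exact le_csSup (bddAbove_extTimes τ p) ht

lemma exists_arc_of_ne_top {p : V} (hp : τ p ≠ ⊤) :
    ∃ c, ∃ t : ℕ, τ p = t ∧ t ∈ lab p c ∧ (t : ℕ∞) < τ c := by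
  rw [hτ, greedyStart] at hp ⊢
  split_ifs at hp ⊢ with hne
  · obtain ⟨c, hc, hlt⟩ := Nat.sSup_mem hne (bddAbove_extTimes τ p)
    exact ⟨c, _, rfl, hc, hlt⟩
  · exact absurd rfl hp

/-- Along a temporal path ending at a vertex with `τ = ⊤`, every arc time is an extension time
at the tail of the arc: by induction from the end, `τ` of its head bounds the next, larger, arc
time. -/
theorem times_mem_extTimes (P : TPath lab) (i : Fin P.len) (j : Fin (P.len + 1))
    (hij : i.castSucc < j) (hj : τ (P.verts j) = ⊤) :
    P.times i ∈ extTimes lab τ (P.verts i.castSucc) := by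
  refine ⟨_, P.mem_lab i, ?_⟩
  rcases eq_or_lt_of_le (Fin.castSucc_lt_iff_succ_le.1 hij) with hs | hs
  · rw [hs, hj]
    exact ENat.natCast_lt_top _
  · have hlt : (i : ℕ) + 1 < j := hs
    set i' : Fin P.len := ⟨i + 1, by omega⟩
    have hi' : i'.castSucc = i.succ := rfl
    have hnext := times_mem_extTimes P i' j (hi' ▸ hs) hj
    rw [hi'] at hnext
    exact lt_of_lt_of_le (by exact_mod_cast P.mono (show i < i' from Fin.lt_def.2 (by simp [i'])))
      (le_of_mem_extTimes hτ hnext)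
termination_by (j : ℕ) - i
decreasing_by omega

lemma isTempAntichain_setOf_eq_top : IsTempAntichain lab {v | τ v = ⊤} := by
  have key : ∀ (P : TPath lab) (i j : Fin (P.len + 1)), i < j → τ (P.verts i) = ⊤ →
      τ (P.verts j) = ⊤ → False := fun P i j hij hi hj =>
    ne_top_of_mem_extTimes hτ (times_mem_extTimes hτ P ⟨i, by omega⟩ j hij hj) hi
  rintro a ha b hb hab ⟨P, ⟨i, rfl⟩, ⟨j, rfl⟩⟩
  rcases lt_trichotomy i j with h | rfl | h
  · exact key P i j h ha hb
  · exact hab rfl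
  · exact key P j i h hb ha

end Greedy

section GreedyPaths

variable {V : Type*} {lab : V → V → Finset ℕ} {τ : V → ℕ∞} {nxt : V → V}

def GreedySucc (τ : V → ℕ∞) (nxt : V → V) (u c : V) : Prop := τ u ≠ ⊤ ∧ nxt u = c

variable (hnxt : ∀ u, τ u ≠ ⊤ → ∃ t : ℕ, τ u = t ∧ t ∈ lab u (nxt u) ∧ (t : ℕ∞) < τ (nxt u))
include hnxt

lemma GreedySucc.lt {u c : V} (h : GreedySucc τ nxt u c) : τ u < τ c := by
  obtain ⟨t, ht, -, hlt⟩ := hnxt u h.1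
  rw [ht, ← h.2]
  exact hlt

lemma GreedySucc.arc {u c : V} (h : GreedySucc τ nxt u c) : Arc lab u c := by
  obtain ⟨t, -, ht, -⟩ := hnxt u h.1
  exact h.2 ▸ ⟨t, ht⟩

lemma GreedySucc.le_of_reflTransGen {u w : V} (h : Relation.ReflTransGen (GreedySucc τ nxt) u w) :
    τ u ≤ τ w := by
  induction h with
  | refl => exact le_rfl
  | tail _ hs ih => exact ih.trans (hs.lt hnxt).le

theorem exists_tpath_vertexSet_eq (hwf : WellFounded fun c p => Arc lab p c) (v : V) :
    ∃ P : TPath lab, P.vertexSet = {w | Relation.ReflTransGen (GreedySucc τ nxt) v w} := by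
  suffices ∀ v, ∃ P : TPath lab, P.verts 0 = v ∧ (∀ i, τ v ≤ P.times i) ∧
      P.vertexSet = {w | Relation.ReflTransGen (GreedySucc τ nxt) v w} from
    (this v).imp fun _ h => h.2.2
  intro v
  induction v using hwf.induction with
  | _ v ih =>
  by_cases hv : τ v = ⊤
  · refine ⟨TPath.single lab v, rfl, fun i => i.elim0, ?_⟩
    ext w
    rw [TPath.vertexSet_single, Set.mem_singleton_iff, Set.mem_ofPred,
      Relation.ReflTransGen.cases_head_iff]
    simp [GreedySucc, hv, eq_comm]
  · obtain ⟨t, hvt, ht, hlt⟩ := hnxt v hv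
    obtain ⟨P, hP0, hPt, hPset⟩ := ih (nxt v) ⟨t, ht⟩
    have hvP : v ∉ P.vertexSet := by
      rw [hPset]
      exact fun h => (hvt ▸ hlt).not_ge (GreedySucc.le_of_reflTransGen hnxt h)
    refine ⟨P.cons v t hvP (hP0 ▸ ht) (fun i => ?_), ?_, ?_, ?_⟩
    · exact_mod_cast hlt.trans_le (hPt i)
    · rfl
    · exact Fin.cases hvt.le fun i => (hvt ▸ hlt).le.trans (hPt i)
    · ext w
      rw [TPath.vertexSet_cons, hPset, Set.mem_ofPred, Relation.ReflTransGen.cases_head_iff]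
      simp [GreedySucc, hv, eq_comm]

lemma exists_top_reflTransGen [Finite V] (w : V) :
    ∃ v, (∀ u, ¬ GreedySucc τ nxt u v) ∧ Relation.ReflTransGen (GreedySucc τ nxt) v w := by
  obtain ⟨v, hvw, hmin⟩ := Set.exists_min_image {v | Relation.ReflTransGen (GreedySucc τ nxt) v w}
    τ (Set.toFinite _) ⟨w, .refl⟩
  exact ⟨v, fun u hu => (hu.lt hnxt).not_ge (hmin u (.head hu hvw)), hvw⟩

variable (hunique : Relator.LeftUnique (Arc lab))
include hunique

/-- The greedy paths have as many first vertices as last vertices: `nxt` maps the vertices that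
do not end a path injectively onto those that do not start one. -/
lemma ncard_top_eq [Finite V] :
    {v | ∀ u, ¬ GreedySucc τ nxt u v}.ncard = {v | τ v = ⊤}.ncard := by
  have hcompl : {v | ∀ u, ¬ GreedySucc τ nxt u v}ᶜ = nxt '' {v | τ v = ⊤}ᶜ := by
    ext v
    simp [GreedySucc]
  have hinj : Set.InjOn nxt {v | τ v = ⊤}ᶜ := fun u hu u' hu' h =>
    hunique (GreedySucc.arc hnxt ⟨hu, rfl⟩) (GreedySucc.arc hnxt ⟨hu', h.symm⟩)
  have h1 := Set.ncard_add_ncard_compl {v | ∀ u, ¬ GreedySucc τ nxt u v}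
  have h2 := Set.ncard_add_ncard_compl {v | τ v = ⊤}
  rw [hcompl, hinj.ncard_image] at h1
  omega

lemma eq_of_reflTransGen_greedySucc {v v' w : V} (hv : ∀ u, ¬ GreedySucc τ nxt u v)
    (hv' : ∀ u, ¬ GreedySucc τ nxt u v') (hw : Relation.ReflTransGen (GreedySucc τ nxt) v w)
    (hw' : Relation.ReflTransGen (GreedySucc τ nxt) v' w) : v = v' := by
  have hright : Relator.RightUnique (flip (GreedySucc τ nxt)) :=
    fun _ _ _ h h' => hunique (h.arc hnxt) (h'.arc hnxt)
  rw [← Relation.reflTransGen_swap] at hw hw'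
  rcases hw.total_of_right_unique hright hw' with h | h <;>
    rw [Relation.reflTransGen_swap] at h <;>
    rcases h.cases_tail with h | ⟨u, -, hu⟩
  · exact h
  · exact absurd hu (hv u)
  · exact h.symm
  · exact absurd hu (hv' u)

end GreedyPaths

theorem dilworth_of_wellFounded_of_leftUnique {V : Type*} [Fintype V] {lab : V → V → Finset ℕ}
    (hwf : WellFounded fun c p => Arc lab p c) (hunique : Relator.LeftUnique (Arc lab)) :
    ∃ k : ℕ, IsLeast (tdpcSizes lab) k ∧ IsLeast (tpcSizes lab) k ∧
      IsGreatest (antichainSizes lab) k := by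
  classical
  obtain ⟨τ, hτ⟩ := exists_eq_greedyStart hwf
  choose! nxt hnxt using fun u (hu : τ u ≠ ⊤) => exists_arc_of_ne_top hτ hu
  choose P hP using exists_tpath_vertexSet_eq hnxt hwf
  refine dilworth_of_disjoint_cover (ι := {v | ∀ u, ¬ GreedySucc τ nxt u v}) (fun v => P v)
    (S := {v | τ v = ⊤}.toFinset) (fun w => ?_) (fun v v' hne => ?_) ?_ ?_
  · obtain ⟨v, hv, hvw⟩ := exists_top_reflTransGen hnxt w
    exact ⟨⟨v, hv⟩, (hP v).symm ▸ hvw⟩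
  · simp only [hP, Set.disjoint_left]
    exact fun w hw hw' =>
      hne (Subtype.ext (eq_of_reflTransGen_greedySucc hnxt hunique v.2 v'.2 hw hw'))
  · simpa using isTempAntichain_setOf_eq_top hτ
  · simp only [Set.toFinset_card, ← Nat.card_eq_fintype_card, Nat.card_coe_set_eq]
    exact (ncard_top_eq hnxt hunique).symm

section RootedTree

variable {V : Type*} {lab : V → V → Finset ℕ}

lemma not_arc_swap (horient : ∀ u v : V, (lab u v).Nonempty → lab v u = ∅) {u v : V}
    (h : Arc lab u v) : ¬ Arc lab v u := by
  simp [Arc, horient u v h]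

lemma ne_of_arc (horient : ∀ u v : V, (lab u v).Nonempty → lab v u = ∅) {u v : V}
    (h : Arc lab u v) : u ≠ v := by
  rintro rfl
  exact not_arc_swap horient h h

/-- Edge counting: `v ↦ s(par v, v)` injects the `n - 1` non-root vertices into the `n - 1`
edges of the tree, so every edge is of this form. -/
lemma eq_parent_of_arc [Fintype V] (horient : ∀ u v : V, (lab u v).Nonempty → lab v u = ∅)
    (htree : (underlyingGraph lab).IsTree) {r : V} {par : V → V}
    (hpar : ∀ v, v ≠ r → Arc lab (par v) v) {u v : V} (huv : Arc lab u v) :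
    v ≠ r ∧ u = par v := by
  classical
  have hadj : ∀ {a b}, Arc lab a b → (underlyingGraph lab).Adj a b :=
    fun h => ⟨ne_of_arc horient h, Or.inl h⟩
  have hmaps : ∀ w ∈ Finset.univ.erase r, s(par w, w) ∈ (underlyingGraph lab).edgeFinset :=
    fun w hw => SimpleGraph.mem_edgeFinset.2 (hadj (hpar w (Finset.ne_of_mem_erase hw)))
  have hinj : Set.InjOn (fun w => s(par w, w)) (Finset.univ.erase r) := by
    intro w hw w' hw' h
    rcases Sym2.eq_iff.1 h with ⟨-, h⟩ | ⟨h₁, h₂⟩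
    · exact h
    · have h := hpar w (Finset.ne_of_mem_erase hw)
      have h' := hpar w' (Finset.ne_of_mem_erase hw')
      rw [h₁] at h
      rw [← h₂] at h'
      exact absurd h (not_arc_swap horient h')
  have himage : (Finset.univ.erase r).image (fun w => s(par w, w)) =
      (underlyingGraph lab).edgeFinset := by
    refine Finset.eq_of_subset_of_card_le (Finset.image_subset_iff.2 hmaps) ?_
    rw [Finset.card_image_of_injOn hinj, Finset.card_erase_of_mem (Finset.mem_univ r),
      Finset.card_univ, ← htree.card_edgeFinset, Nat.add_sub_cancel]
  obtain ⟨w, hw, h⟩ := Finset.mem_image.1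
    (himage ▸ SimpleGraph.mem_edgeFinset.2 (hadj huv) : s(u, v) ∈ _)
  rcases Sym2.eq_iff.1 h with ⟨h₁, rfl⟩ | ⟨h₁, rfl⟩
  · exact ⟨Finset.ne_of_mem_erase hw, h₁.symm⟩
  · exact absurd (h₁ ▸ hpar w (Finset.ne_of_mem_erase hw)) (not_arc_swap horient huv)

theorem wellFounded_and_leftUnique_of_rooted [Fintype V] (htree : IsTemporalOrientedTree lab)
    {r : V} (hroot : ∀ v, Relation.ReflTransGen (Arc lab) r v) :
    (WellFounded fun c p => Arc lab p c) ∧ Relator.LeftUnique (Arc lab) := by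
  choose! par hpar using fun v (hv : v ≠ r) =>
    ((hroot v).cases_tail.resolve_left hv).imp fun _ h => h.2
  have hparent := fun {u v} (h : Arc lab u v) => eq_parent_of_arc htree.2 htree.1 hpar h
  have hunique : Relator.LeftUnique (Arc lab) := fun _ _ _ h h' =>
    (hparent h).2.trans (hparent h').2.symm
  have hirrefl : ∀ v, ¬ Relation.TransGen (Arc lab) v v := by
    intro v
    induction hroot v with
    | refl =>
      intro h
      obtain ⟨u, -, hu⟩ := Relation.TransGen.tail'_iff.1 h
      exact (hparent hu).1 rfl
    | @tail a b _ hab ih =>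
      intro h
      -- a cycle through `b` enters `b` from its only in-neighbour `a`
      obtain ⟨u, hbu, hu⟩ := Relation.TransGen.tail'_iff.1 h
      obtain rfl := hunique hu hab
      exact ih (.head' hab hbu)
  refine ⟨Subrelation.wf (fun h => Relation.TransGen.single h)
    (@Finite.wellFounded_of_trans_of_irrefl V _ (fun c p => Relation.TransGen (Arc lab) p c)
      ⟨fun _ _ _ h h' => h'.trans h⟩ ⟨hirrefl⟩), hunique⟩

end RootedTree

theorem rooted_tree_dilworth_general {V : Type*} [Fintype V] (lab : V → V → Finset ℕ)
    (htree : IsTemporalOrientedTree lab)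
    (hroot : ∃ r : V, ∀ v : V, Relation.ReflTransGen (fun a b => (lab a b).Nonempty) r v) :
    ∃ k : ℕ, IsLeast (tdpcSizes lab) k ∧ IsLeast (tpcSizes lab) k ∧
      IsGreatest (antichainSizes lab) k := by
  obtain ⟨r, hr⟩ := hroot
  obtain ⟨hwf, hunique⟩ := wellFounded_and_leftUnique_of_rooted htree hr
  exact dilworth_of_wellFounded_of_leftUnique hwf hunique

/-- Temporal rooted directed trees satisfy the Dilworth and TD-Dilworth properties. -/
theorem rooted_tree_dilworth {V : Type*} [Fintype V] (lab : V → V → Finset ℕ)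
    (hpos : PositiveLabels lab) (htree : IsTemporalOrientedTree lab)
    (hroot : ∃ r : V, ∀ v : V, Relation.ReflTransGen (fun a b => (lab a b).Nonempty) r v) :
    ∃ k : ℕ, IsLeast (tdpcSizes lab) k ∧ IsLeast (tpcSizes lab) k ∧
      IsGreatest (antichainSizes lab) k :=
  rooted_tree_dilworth_general lab htree hroot
end

section
/- Let 𝒯 = (T, λ) be a temporal oriented tree, let G be its connectivity graph, and let u_1, u_2, …, u_k (indices taken modulo k) be the cyclically ordered vertices of an induced cycle of G of even length k ≥ 6. Then for every index i, every temporal path of 𝒯 containing both u_i and u_{i+1} shares at least one vertex with every temporal path of 𝒯 containing both u_{i+2} and u_{i+3}. -/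
/-! If `P` and `Q` were disjoint, a temporal path `W` through `u_{i+1} ∈ P` and `u_{i+2} ∈ Q`
would leave `P` along some arc `a → b`. Deleting the edge `ab` splits the tree into two sides;
no temporal path crosses from the side of `b` to that of `a`, and one going the other way
must use the arc `a → b` itself, so `P` and `Q` lie on opposite sides. Walking around the
cycle from `u_{i+3}` back to `u_i` we meet consecutive `u_j, u_{j+1}` on opposite sides, and a
temporal path `Z` through them also uses `a → b`. Following whichever of `W`, `Z` traverses
the arc first up to `a`, and the other one from `b` on, temporally connects one of
`u_{i+1}, u_{i+2}` to one of `u_j, u_{j+1}` lying on the other side. The only cycle neighbours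
of `u_{i+1}, u_{i+2}` on that stretch, `u_i` and `u_{i+3}`, lie on their own sides, so this is
a chord of the induced cycle. -/

theorem Nat.exists_iff_not_succ {f : ℕ → Prop} {p q : ℕ} (h : f p ↔ ¬ f q) :
    ∃ k, (p ≤ k ∧ k < q ∨ q ≤ k ∧ k < p) ∧ (f k ↔ ¬ f (k + 1)) := by
  have key : ∀ p d, (f p ↔ ¬ f (p + d)) →
      ∃ k, p ≤ k ∧ k < p + d ∧ (f k ↔ ¬ f (k + 1)) := by
    intro p d
    induction d with
    | zero => exact fun h => (iff_not_self h).elim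
    | succ d ih =>
      intro h
      by_cases hd : f p ↔ ¬ f (p + d)
      · obtain ⟨k, hpk, hkd, hk⟩ := ih hd
        exact ⟨k, hpk, by omega, hk⟩
      · exact ⟨p + d, by omega, by omega, by tauto⟩
  rcases le_total p q with hpq | hqp
  · obtain ⟨d, rfl⟩ := Nat.exists_eq_add_of_le hpq
    obtain ⟨k, hk⟩ := key p d h
    exact ⟨k, Or.inl ⟨hk.1, hk.2.1⟩, hk.2.2⟩
  · obtain ⟨d, rfl⟩ := Nat.exists_eq_add_of_le hqp
    obtain ⟨k, hk⟩ := key q d (by tauto)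
    exact ⟨k, Or.inr ⟨hk.1, hk.2.1⟩, hk.2.2⟩

theorem Set.exists_mem_pair_notMem_and_mem {V : Type*} {S : Set V} {x y : V}
    (h : x ∈ S ↔ y ∉ S) :
    (∃ v ∈ ({x, y} : Set V), v ∉ S) ∧ ∃ w ∈ ({x, y} : Set V), w ∈ S := by
  by_cases hx : x ∈ S
  · exact ⟨⟨y, by simp, h.1 hx⟩, ⟨x, by simp, hx⟩⟩
  · exact ⟨⟨x, by simp, hx⟩, ⟨y, by simp, by tauto⟩⟩

theorem TempConnected.symm {V : Type*} {lab : V → V → Finset ℕ} {u v : V}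
    (h : TempConnected lab u v) : TempConnected lab v u :=
  let ⟨P, hu, hv⟩ := h
  ⟨P, hv, hu⟩

namespace TPath

variable {V : Type*} {lab : V → V → Finset ℕ}

/-- Vertices indexed by `ℕ`; indices past `P.len` give the last vertex. -/
def vtx (P : TPath lab) (m : ℕ) : V :=
  P.verts (Fin.clamp m P.len)

/-- Times indexed by `ℕ`; indices from `P.len` on give the junk value `0`. -/
def time (P : TPath lab) (m : ℕ) : ℕ :=
  if h : m < P.len then P.times ⟨m, h⟩ else 0

theorem vtx_of_le (P : TPath lab) {m : ℕ} (h : m ≤ P.len) :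
    P.vtx m = P.verts ⟨m, Nat.lt_succ_of_le h⟩ := by
  simp [vtx, Fin.clamp, Nat.min_eq_left h]

theorem vtx_injOn (P : TPath lab) : Set.InjOn P.vtx (Set.Iic P.len) := by
  intro m hm m' hm' he
  rw [vtx_of_le P hm, vtx_of_le P hm'] at he
  simpa using P.inj he

theorem time_strictMonoOn (P : TPath lab) : StrictMonoOn P.time (Set.Iio P.len) := by
  intro m hm m' hm' hlt
  simp only [time, dif_pos (show m < P.len from hm), dif_pos (show m' < P.len from hm')]
  exact P.mono (Fin.mk_lt_mk.2 hlt)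

theorem time_mem_lab (P : TPath lab) {m : ℕ} (h : m < P.len) :
    P.time m ∈ lab (P.vtx m) (P.vtx (m + 1)) := by
  rw [time, dif_pos h, vtx_of_le P h.le, vtx_of_le P h]
  exact P.mem_lab ⟨m, h⟩

theorem vtx_mem_vertexSet (P : TPath lab) (m : ℕ) : P.vtx m ∈ P.vertexSet :=
  ⟨_, rfl⟩

theorem mem_vertexSet_iff (P : TPath lab) {v : V} :
    v ∈ P.vertexSet ↔ ∃ m ≤ P.len, P.vtx m = v := by
  refine ⟨?_, fun ⟨m, _, hm⟩ => hm ▸ P.vtx_mem_vertexSet m⟩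
  rintro ⟨i, rfl⟩
  exact ⟨i, Nat.lt_succ_iff.1 i.2, by rw [vtx_of_le P (Nat.lt_succ_iff.1 i.2)]⟩

def ofFun (len : ℕ) (f : ℕ → V) (τ : ℕ → ℕ) (hf : Set.InjOn f (Set.Iic len))
    (hτ : StrictMonoOn τ (Set.Iio len)) (hlab : ∀ m < len, τ m ∈ lab (f m) (f (m + 1))) :
    TPath lab where
  len := len
  verts i := f i
  times i := τ i
  inj i j h := Fin.ext (hf (Nat.lt_succ_iff.1 i.2) (Nat.lt_succ_iff.1 j.2) h)
  mono i j h := hτ i.2 j.2 h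
  mem_lab i := hlab i i.2

theorem mem_vertexSet_ofFun {len : ℕ} {f : ℕ → V} {τ : ℕ → ℕ} {hf hτ hlab} {m : ℕ}
    (hm : m ≤ len) : f m ∈ (ofFun (lab := lab) len f τ hf hτ hlab).vertexSet :=
  ⟨⟨m, Nat.lt_succ_of_le hm⟩, rfl⟩

/-- The connecting path follows `R` up to `R.vtx i = Z.vtx j` and `Z` from there on. -/
theorem tempConnected_of_glue (R Z : TPath lab) {i j : ℕ} (hi : i ≤ R.len)
    (hij : R.vtx i = Z.vtx j) (htime : ∀ m < i, R.time m < Z.time j)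
    (hdisj : ∀ s ≤ i, ∀ s', j < s' → s' ≤ Z.len → R.vtx s ≠ Z.vtx s')
    {s s' : ℕ} (hs : s ≤ i) (hjs' : j < s') (hs' : s' ≤ Z.len) :
    TempConnected lab (R.vtx s) (Z.vtx s') := by
  let f : ℕ → V := fun m => if m ≤ i then R.vtx m else Z.vtx (m - i + j)
  let τ : ℕ → ℕ := fun m => if m < i then R.time m else Z.time (m - i + j)
  have hf : Set.InjOn f (Set.Iic (i + (Z.len - j))) := by
    intro m hm m' hm' he
    simp only [Set.mem_Iic] at hm hm'
    by_cases h : m ≤ i <;> by_cases h' : m' ≤ i <;> simp only [f, h, h', if_true, if_false] at he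
    · exact R.vtx_injOn (Set.mem_Iic.2 (by omega)) (Set.mem_Iic.2 (by omega)) he
    · exact absurd he (hdisj m h _ (by omega) (by omega))
    · exact absurd he.symm (hdisj m' h' _ (by omega) (by omega))
    · have := Z.vtx_injOn (Set.mem_Iic.2 (by omega)) (Set.mem_Iic.2 (by omega)) he
      omega
  have hτ : StrictMonoOn τ (Set.Iio (i + (Z.len - j))) := by
    intro m hm m' hm' hlt
    simp only [Set.mem_Iio] at hm hm'
    by_cases h : m < i <;> by_cases h' : m' < i <;> simp only [τ, h, h', if_true, if_false]
    · exact R.time_strictMonoOn (show m < R.len by omega) (show m' < R.len by omega) hlt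
    · calc R.time m < Z.time j := htime m h
        _ ≤ Z.time (m' - i + j) :=
          Z.time_strictMonoOn.monotoneOn (show j < Z.len by omega)
            (show m' - i + j < Z.len by omega) (by omega)
    · omega
    · exact Z.time_strictMonoOn (show m - i + j < Z.len by omega)
        (show m' - i + j < Z.len by omega) (by omega)
  have hlab : ∀ m < i + (Z.len - j), τ m ∈ lab (f m) (f (m + 1)) := by
    intro m hm
    simp only [f, τ]
    rcases lt_trichotomy m i with h | rfl | h
    · simp only [h, h.le, Nat.succ_le_of_lt h, if_true]
      exact R.time_mem_lab (by omega)
    · simp only [lt_irrefl, le_refl, if_true, if_false, Nat.sub_self, zero_add,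
        show ¬ m + 1 ≤ m by omega, show m + 1 - m + j = j + 1 by omega, hij]
      exact Z.time_mem_lab (by omega)
    · simp only [show ¬ m < i by omega, show ¬ m ≤ i by omega, show ¬ m + 1 ≤ i by omega,
        if_false, show m + 1 - i + j = m - i + j + 1 by omega]
      exact Z.time_mem_lab (by omega)
  refine ⟨ofFun _ f τ hf hτ hlab, ?_, ?_⟩
  · have := mem_vertexSet_ofFun (hf := hf) (hτ := hτ) (hlab := hlab) (show s ≤ _ by omega)
    simpa only [f, if_pos hs] using this
  · have := mem_vertexSet_ofFun (hf := hf) (hτ := hτ) (hlab := hlab)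
      (show s' - j + i ≤ _ by omega)
    simpa only [f, if_neg (show ¬ s' - j + i ≤ i by omega),
      show s' - j + i - i + j = s' by omega] using this

end TPath

structure IsArcCut {V : Type*} (lab : V → V → Finset ℕ) (S : Set V) (a b : V) : Prop where
  left_notMem : a ∉ S
  right_mem : b ∈ S
  mem_iff_or : ∀ ⦃v w⦄, (lab v w).Nonempty → (v ∈ S ↔ w ∈ S) ∨ (v = a ∧ w = b)

namespace IsArcCut

variable {V : Type*} {lab : V → V → Finset ℕ} {S : Set V} {a b : V}

theorem mem_of_arc (hS : IsArcCut lab S a b) {v w : V} (hvw : (lab v w).Nonempty)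
    (hv : v ∈ S) : w ∈ S := by
  rcases hS.mem_iff_or hvw with h | ⟨rfl, -⟩
  · exact h.1 hv
  · exact absurd hv hS.left_notMem

theorem vtx_mem_of_le (hS : IsArcCut lab S a b) (R : TPath lab) {p q : ℕ} (hp : R.vtx p ∈ S)
    (hpq : p ≤ q) (hq : q ≤ R.len) : R.vtx q ∈ S := by
  induction q, hpq using Nat.le_induction with
  | base => exact hp
  | succ q _ ih => exact hS.mem_of_arc ⟨_, R.time_mem_lab hq⟩ (ih (by omega))

theorem vtx_mem_iff (hS : IsArcCut lab S a b) {R : TPath lab} {j m : ℕ} (hj : j < R.len)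
    (ha : R.vtx j = a) (hb : R.vtx (j + 1) = b) (hm : m ≤ R.len) : R.vtx m ∈ S ↔ j < m := by
  refine ⟨fun h => ?_, fun h => hS.vtx_mem_of_le R (hb ▸ hS.right_mem) h hm⟩
  by_contra hjm
  exact hS.left_notMem (ha ▸ hS.vtx_mem_of_le R h (by omega) hj.le)

theorem exists_arc (hS : IsArcCut lab S a b) {R : TPath lab} {v w : V}
    (hv : v ∈ R.vertexSet) (hw : w ∈ R.vertexSet) (hvw : v ∈ S ↔ w ∉ S) :
    ∃ j < R.len, R.vtx j = a ∧ R.vtx (j + 1) = b := by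
  obtain ⟨p, hp, rfl⟩ := R.mem_vertexSet_iff.1 hv
  obtain ⟨q, hq, rfl⟩ := R.mem_vertexSet_iff.1 hw
  obtain ⟨k, hk, hflip⟩ := Nat.exists_iff_not_succ (f := fun m => R.vtx m ∈ S) hvw
  have hkR : k < R.len := by omega
  rcases hS.mem_iff_or ⟨_, R.time_mem_lab hkR⟩ with h | h
  · exact absurd h (by tauto)
  · exact ⟨k, hkR, h⟩

theorem mem_iff_of_notMem_or_notMem (hS : IsArcCut lab S a b) {R : TPath lab}
    (hab : a ∉ R.vertexSet ∨ b ∉ R.vertexSet) {v w : V} (hv : v ∈ R.vertexSet)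
    (hw : w ∈ R.vertexSet) : v ∈ S ↔ w ∈ S := by
  by_contra hvw
  obtain ⟨j, -, ha, hb⟩ := hS.exists_arc hv hw (by tauto)
  exact hab.elim (· (ha ▸ R.vtx_mem_vertexSet j)) (· (hb ▸ R.vtx_mem_vertexSet (j + 1)))

theorem tempConnected_of_time_le (hS : IsArcCut lab S a b) {R Z : TPath lab} {jR jZ : ℕ}
    (hjR : jR < R.len) (haR : R.vtx jR = a) (hbR : R.vtx (jR + 1) = b)
    (hjZ : jZ < Z.len) (haZ : Z.vtx jZ = a) (hbZ : Z.vtx (jZ + 1) = b)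
    (ht : R.time jR ≤ Z.time jZ) {v w : V} (hv : v ∈ R.vertexSet) (hvS : v ∉ S)
    (hw : w ∈ Z.vertexSet) (hwS : w ∈ S) : TempConnected lab v w := by
  obtain ⟨p, hp, rfl⟩ := R.mem_vertexSet_iff.1 hv
  obtain ⟨q, hq, rfl⟩ := Z.mem_vertexSet_iff.1 hw
  have hR : ∀ {s}, s ≤ R.len → (R.vtx s ∈ S ↔ jR < s) := hS.vtx_mem_iff hjR haR hbR
  have hZ : ∀ {s}, s ≤ Z.len → (Z.vtx s ∈ S ↔ jZ < s) := hS.vtx_mem_iff hjZ haZ hbZ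
  refine R.tempConnected_of_glue Z hjR.le (haR.trans haZ.symm)
    (fun m hm => (R.time_strictMonoOn (show m < R.len by omega) hjR hm).trans_le ht)
    (fun s hs s' hs' hs'Z he => ?_) (not_lt.1 ((hR hp).not.1 hvS)) ((hZ hq).1 hwS) hq
  -- `R` lies outside `S` up to the arc and `Z` inside `S` after it, so the pieces are disjoint.
  have := (hR (hs.trans hjR.le)).1 (he ▸ (hZ hs'Z).2 hs')
  omega

theorem exists_tempConnected (hS : IsArcCut lab S a b) {R Z : TPath lab} {u₁ u₂ z₁ z₂ : V}
    (hu₁ : u₁ ∈ R.vertexSet) (hu₂ : u₂ ∈ R.vertexSet) (hz₁ : z₁ ∈ Z.vertexSet)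
    (hz₂ : z₂ ∈ Z.vertexSet) (hu : u₁ ∈ S ↔ u₂ ∉ S) (hz : z₁ ∈ S ↔ z₂ ∉ S) :
    ∃ u ∈ ({u₁, u₂} : Set V), ∃ z ∈ ({z₁, z₂} : Set V), (u ∈ S ↔ z ∉ S) ∧
      TempConnected lab u z := by
  have hRu : ({u₁, u₂} : Set V) ⊆ R.vertexSet := Set.insert_subset hu₁ (by simpa using hu₂)
  have hZz : ({z₁, z₂} : Set V) ⊆ Z.vertexSet := Set.insert_subset hz₁ (by simpa using hz₂)
  obtain ⟨jR, hjR, haR, hbR⟩ := hS.exists_arc hu₁ hu₂ hu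
  obtain ⟨jZ, hjZ, haZ, hbZ⟩ := hS.exists_arc hz₁ hz₂ hz
  obtain ⟨⟨v, hv, hvS⟩, ⟨w, hw, hwS⟩⟩ := Set.exists_mem_pair_notMem_and_mem hu
  obtain ⟨⟨v', hv', hv'S⟩, ⟨w', hw', hw'S⟩⟩ := Set.exists_mem_pair_notMem_and_mem hz
  rcases le_total (R.time jR) (Z.time jZ) with ht | ht
  · exact ⟨v, hv, w', hw', by tauto, hS.tempConnected_of_time_le hjR haR hbR hjZ haZ hbZ ht
      (hRu hv) hvS (hZz hw') hw'S⟩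
  · exact ⟨w, hw, v', hv', by tauto, (hS.tempConnected_of_time_le hjZ haZ hbZ hjR haR hbR ht
      (hZz hv') hv'S (hRu hw) hwS).symm⟩

end IsArcCut

theorem IsTemporalOrientedTree.isArcCut {V : Type*} {lab : V → V → Finset ℕ}
    (htree : IsTemporalOrientedTree lab) {a b : V} (hab : (lab a b).Nonempty) :
    IsArcCut lab {v | ((underlyingGraph lab).deleteEdges {s(a, b)}).Reachable v b} a b := by
  have hne : ∀ {v w}, (lab v w).Nonempty → v ≠ w := fun hvw h => by
    subst h; simp [htree.2 _ _ hvw] at hvw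
  refine ⟨?_, .refl b, fun v w hvw => ?_⟩
  · have hbridge := SimpleGraph.isAcyclic_iff_forall_adj_isBridge.1 htree.1.isAcyclic
      (show (underlyingGraph lab).Adj a b from ⟨hne hab, Or.inl hab⟩)
    exact SimpleGraph.isBridge_iff.1 hbridge
  by_cases he : s(v, w) = s(a, b)
  · rcases Sym2.eq_iff.1 he with ⟨rfl, rfl⟩ | ⟨rfl, rfl⟩
    · exact Or.inr ⟨rfl, rfl⟩
    · simp [htree.2 _ _ hab] at hvw
  · have hadj : ((underlyingGraph lab).deleteEdges {s(a, b)}).Adj v w :=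
      SimpleGraph.deleteEdges_adj.2 ⟨⟨hne hvw, Or.inl hvw⟩, he⟩
    exact Or.inl ⟨hadj.symm.reachable.trans, hadj.reachable.trans⟩

theorem IsTemporalOrientedTree.exists_isArcCut_separating {V : Type*}
    {lab : V → V → Finset ℕ} (htree : IsTemporalOrientedTree lab) {P Q W : TPath lab}
    (hPQ : Disjoint P.vertexSet Q.vertexSet) {u v : V} (huP : u ∈ P.vertexSet)
    (hvQ : v ∈ Q.vertexSet) (huW : u ∈ W.vertexSet) (hvW : v ∈ W.vertexSet) :
    ∃ S a b, IsArcCut lab S a b ∧ ∀ x ∈ P.vertexSet, ∀ y ∈ Q.vertexSet, (x ∈ S ↔ y ∉ S) := by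
  obtain ⟨p, hp, rfl⟩ := W.mem_vertexSet_iff.1 huW
  obtain ⟨q, hq, rfl⟩ := W.mem_vertexSet_iff.1 hvW
  obtain ⟨k, hk, hleave⟩ := Nat.exists_iff_not_succ (f := fun m => W.vtx m ∈ P.vertexSet)
    (p := p) (q := q) (iff_of_true huP (Set.disjoint_right.1 hPQ hvQ))
  have hkW : k < W.len := by omega
  have hS := htree.isArcCut ⟨_, W.time_mem_lab hkW⟩
  refine ⟨_, _, _, hS, fun x hx y hy => ?_⟩
  have hP : x ∈ _ ↔ W.vtx p ∈ _ := hS.mem_iff_of_notMem_or_notMem (by tauto) hx huP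
  have hQ : y ∈ _ ↔ W.vtx q ∈ _ := hS.mem_iff_of_notMem_or_notMem
    (by by_cases ha : W.vtx k ∈ P.vertexSet
        · exact Or.inl (Set.disjoint_left.1 hPQ ha)
        · exact Or.inr (Set.disjoint_left.1 hPQ (by tauto))) hy hvQ
  rw [hP, hQ, hS.vtx_mem_iff hkW rfl rfl hp, hS.vtx_mem_iff hkW rfl rfl hq]
  omega

def shiftMod {n : ℕ} (i : Fin n) (t : ℕ) : Fin n :=
  ⟨(i.val + t) % n, Nat.mod_lt _ i.pos⟩

theorem shiftMod_zero {n : ℕ} (i : Fin n) : shiftMod i 0 = i :=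
  Fin.ext (Nat.mod_eq_of_lt i.2)

theorem shiftMod_self {n : ℕ} (i : Fin n) : shiftMod i n = i :=
  Fin.ext (by simp [shiftMod, Nat.mod_eq_of_lt i.2])

theorem val_shiftMod_succ {n : ℕ} (i : Fin n) (t : ℕ) :
    (shiftMod i (t + 1)).val = ((shiftMod i t).val + 1) % n := by
  simp [shiftMod, Nat.add_assoc]

theorem IsInducedCycle.adj_shiftMod_iff {V : Type*} {G : SimpleGraph V} {n : ℕ} {c : Fin n → V}
    (hc : IsInducedCycle G n c) (hn : 2 ≤ n) (i : Fin n) {t t' : ℕ} (htt' : t ≤ t')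
    (ht' : t' < t + n) :
    G.Adj (c (shiftMod i t)) (c (shiftMod i t')) ↔ t' = t + 1 ∨ t' + 1 = t + n := by
  obtain ⟨d, rfl⟩ := Nat.exists_eq_add_of_le htt'
  have hfwd : (i.val + t + 1) % n = (i.val + t + d) % n ↔ d = 1 := by
    change i.val + t + 1 ≡ i.val + t + d [MOD n] ↔ _
    rw [Nat.ModEq.rfl.add_iff_left, Nat.ModEq, Nat.mod_eq_of_lt (by omega),
      Nat.mod_eq_of_lt (by omega)]
    omega
  have hbwd : (i.val + t + (d + 1)) % n = (i.val + t) % n ↔ d + 1 = n := by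
    change i.val + t + (d + 1) ≡ i.val + t [MOD n] ↔ _
    rw [Nat.add_modEq_left_iff]
    exact ⟨fun h => le_antisymm (by omega) (Nat.le_of_dvd (by omega) h), fun h => h ▸ dvd_rfl⟩
  rw [hc.2]
  simp only [shiftMod, Nat.mod_add_mod, ← Nat.add_assoc] at hfwd hbwd ⊢
  rw [hfwd, hbwd]
  omega

theorem IsInducedCycle.exists_adj_far_crossing {V : Type*} {G : SimpleGraph V} {n : ℕ}
    {c : Fin n → V} (hc : IsInducedCycle G n c) (hn : 3 ≤ n) {i1 i2 i3 i4 : Fin n}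
    (h12 : (i1.val + 1) % n = i2.val) (h23 : (i2.val + 1) % n = i3.val)
    (h34 : (i3.val + 1) % n = i4.val) (S : Set V)
    (hside : ∀ x ∈ ({c i1, c i2} : Set V), ∀ y ∈ ({c i3, c i4} : Set V), (x ∈ S ↔ y ∉ S)) :
    ∃ j j', G.Adj (c j) (c j') ∧ (c j ∈ S ↔ c j' ∉ S) ∧
      ∀ w ∈ ({c i2, c i3} : Set V), ∀ z ∈ ({c j, c j'} : Set V),
        (w ∈ S ↔ z ∉ S) → ¬ G.Adj w z := by
  have h1 : shiftMod i1 1 = i2 := Fin.ext (by rw [val_shiftMod_succ, shiftMod_zero, h12])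
  have h2 : shiftMod i1 2 = i3 := Fin.ext (by rw [val_shiftMod_succ, h1, h23])
  have h3 : shiftMod i1 3 = i4 := Fin.ext (by rw [val_shiftMod_succ, h2, h34])
  have h13 := hside (c i1) (by simp) (c i3) (by simp)
  have h14 := hside (c i1) (by simp) (c i4) (by simp)
  have hs12 : c i1 ∈ S ↔ c i2 ∈ S := h13.trans (hside (c i2) (by simp) (c i3) (by simp)).symm
  have hs34 : c i3 ∈ S ↔ c i4 ∈ S := not_iff_not.1 (h13.symm.trans h14)
  obtain ⟨r, hr, hcross⟩ := Nat.exists_iff_not_succ (f := fun t => c (shiftMod i1 t) ∈ S)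
    (p := 3) (q := n) (by rw [h3, shiftMod_self]; exact iff_not_comm.1 h14)
  refine ⟨_, _, (hc.adj_shiftMod_iff (by omega) i1 (Nat.le_succ r) (by omega)).2 (Or.inl rfl),
    hcross, ?_⟩
  rintro w hw z hz hwz hwz_adj
  obtain ⟨t, ht, rfl⟩ : ∃ t, (t = 1 ∨ t = 2) ∧ c (shiftMod i1 t) = w := by
    rcases hw with rfl | rfl
    exacts [⟨1, by simp, by rw [h1]⟩, ⟨2, by simp, by rw [h2]⟩]
  obtain ⟨t', ht', rfl⟩ : ∃ t', (t' = r ∨ t' = r + 1) ∧ c (shiftMod i1 t') = z := by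
    rcases hz with rfl | rfl
    exacts [⟨r, by simp, rfl⟩, ⟨r + 1, by simp, rfl⟩]
  rw [hc.adj_shiftMod_iff (by omega) i1 (by omega) (by omega)] at hwz_adj
  obtain ⟨rfl, rfl⟩ | ⟨rfl, rfl⟩ : t = 1 ∧ t' = n ∨ t = 2 ∧ t' = 3 := by omega
  · rw [h1, shiftMod_self, ← hs12] at hwz
    exact iff_not_self hwz
  · rw [h2, h3, ← hs34] at hwz
    exact iff_not_self hwz

theorem consecutive_edges_paths_intersect_general {V : Type*} (lab : V → V → Finset ℕ)
    (htree : IsTemporalOrientedTree lab)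
    (n : ℕ) (hn : 6 ≤ n) (c : Fin n → V)
    (hc : IsInducedCycle (connGraph lab) n c)
    (i1 i2 i3 i4 : Fin n)
    (h12 : (i1.val + 1) % n = i2.val) (h23 : (i2.val + 1) % n = i3.val)
    (h34 : (i3.val + 1) % n = i4.val)
    (P Q : TPath lab)
    (hP1 : c i1 ∈ P.vertexSet) (hP2 : c i2 ∈ P.vertexSet)
    (hQ3 : c i3 ∈ Q.vertexSet) (hQ4 : c i4 ∈ Q.vertexSet) :
    (P.vertexSet ∩ Q.vertexSet).Nonempty := by
  by_contra hPQ
  have hdisj : Disjoint P.vertexSet Q.vertexSet :=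
    Set.disjoint_iff_inter_eq_empty.2 (Set.not_nonempty_iff_eq_empty.1 hPQ)
  obtain ⟨W, hW2, hW3⟩ := ((hc.2 i2 i3).2 (Or.inl h23)).2
  obtain ⟨S, a, b, hS, hsep⟩ := htree.exists_isArcCut_separating hdisj hP2 hQ3 hW2 hW3
  obtain ⟨j, j', hadj, hjj', hfar⟩ := hc.exists_adj_far_crossing (by omega) h12 h23 h34 S
    (by rintro x (rfl | rfl) y (rfl | rfl) <;> apply hsep <;> assumption)
  obtain ⟨Z, hZ, hZ'⟩ := hadj.2
  obtain ⟨w, hw, z, hz, hwz, hconn⟩ :=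
    hS.exists_tempConnected hW2 hW3 hZ hZ' (hsep _ hP2 _ hQ3) hjj'
  exact hfar w hw z hz hwz ⟨fun h => by simp [h] at hwz, hconn⟩

/-- For an induced even cycle u₁, …, uₖ (k ≥ 6) in the connectivity graph of a temporal
oriented tree, any temporal path containing uᵢ and uᵢ₊₁ shares a vertex with any temporal
path containing uᵢ₊₂ and uᵢ₊₃ (indices mod k). -/
theorem consecutive_edges_paths_intersect {V : Type*} [Fintype V] (lab : V → V → Finset ℕ)
    (hpos : PositiveLabels lab) (htree : IsTemporalOrientedTree lab)
    (n : ℕ) (hn : 6 ≤ n) (heven : Even n) (c : Fin n → V)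
    (hc : IsInducedCycle (connGraph lab) n c)
    (i1 i2 i3 i4 : Fin n)
    (h12 : (i1.val + 1) % n = i2.val) (h23 : (i2.val + 1) % n = i3.val)
    (h34 : (i3.val + 1) % n = i4.val)
    (P Q : TPath lab)
    (hP1 : c i1 ∈ P.vertexSet) (hP2 : c i2 ∈ P.vertexSet)
    (hQ3 : c i3 ∈ Q.vertexSet) (hQ4 : c i4 ∈ Q.vertexSet) :
    (P.vertexSet ∩ Q.vertexSet).Nonempty :=
  consecutive_edges_paths_intersect_general lab htree n hn c hc i1 i2 i3 i4 h12 h23 h34 P Q hP1 hP2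
    hQ3 hQ4
end
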